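/- arXiv:2108.01962 — 2 statements merged into one kernel-verified Lean document; each statement's English description precedes it below -/
import Mathlib

section
/- Let T be a closed linear operator on a Banach space X whose resolvent set contains the set {0} ∪ {z ∈ ℂ : |arg z| ≥ σ} for some σ ∈ (0, π), and suppose that μ₀ + T is sectorial of angle ω < σ for some μ₀ > 0 (i.e., σ(μ₀+T) ⊂ closure(Σ_ω) and sup over λ ∉ closure(Σ_ω) of ‖λ(λ - μ₀ - T)⁻¹‖ is finite). Then for every ψ ∈ (σ, π), the set ℂ \ closure(Σ_ψ) is contained in ρ(T) and sup over λ ∈ ℂ \ closure(Σ_ψ) of ‖λ(λ - T)⁻¹‖ is finite; that is, T is sectorial of angle at most σ. -/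
open Real


private lemma aux_cos (ω ψ a b : ℝ) (hω : 0 < ω) (hωψ : ω < ψ) (hψ : ψ < π)
    (ha : ψ ≤ |a|) (ha' : |a| ≤ π) (hb : |b| ≤ ω) :
    Real.cos (a - b) ≤ Real.cos (ψ - ω) := by
  have h1 : ψ - ω ≤ |a - b| := by
    have h := abs_sub_abs_le_abs_sub a b
    linarith
  have h2 : |a - b| ≤ π + ω := by
    have h := abs_add_le a (-b)
    rw [← sub_eq_add_neg, abs_neg] at h
    linarith
  rw [← Real.cos_abs (a - b)]
  rcases le_or_gt (|a - b|) π with ht | ht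
  · exact Real.cos_le_cos_of_nonneg_of_le_pi (by linarith) ht h1
  · have hrw : Real.cos (|a - b|) = Real.cos (2 * π - |a - b|) := by
      rw [Real.cos_two_pi_sub]
    rw [hrw]
    exact Real.cos_le_cos_of_nonneg_of_le_pi (by linarith) (by linarith) (by linarith)

private lemma aux_dist (ω ψ : ℝ) (hω : 0 < ω) (hωψ : ω < ψ) (hψ : ψ < π)
    (lam z : ℂ) (ha : ψ ≤ |lam.arg|) (hb : |z.arg| ≤ ω) :
    Real.sqrt (1 - max (Real.cos (ψ - ω)) 0) * ‖lam‖ ≤ ‖lam - z‖ := by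
  set a := lam.arg with hadef
  set b := z.arg with hbdef
  set A := ‖lam‖ with hAdef
  set B := ‖z‖ with hBdef
  have hA0 : 0 ≤ A := norm_nonneg _
  have hB0 : 0 ≤ B := norm_nonneg _
  have hre : (lam * (starRingEnd ℂ) z).re = A * B * Real.cos (a - b) := by
    have e1 : A * Real.cos a = lam.re := Complex.norm_mul_cos_arg lam
    have e2 : A * Real.sin a = lam.im := Complex.norm_mul_sin_arg lam
    have e3 : B * Real.cos b = z.re := Complex.norm_mul_cos_arg z
    have e4 : B * Real.sin b = z.im := Complex.norm_mul_sin_arg z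
    simp only [Complex.mul_re, Complex.conj_re, Complex.conj_im]
    rw [Real.cos_sub, ← e1, ← e2, ← e3, ← e4]
    ring
  set m := max (Real.cos (ψ - ω)) 0 with hmdef
  have hm0 : 0 ≤ m := le_max_right _ _
  have hm1 : m ≤ 1 := max_le (Real.cos_le_one _) zero_le_one
  have hcos : Real.cos (a - b) ≤ m :=
    le_trans (aux_cos ω ψ a b hω hωψ hψ ha (Complex.abs_arg_le_pi lam) hb) (le_max_left _ _)
  have hsq : ‖lam - z‖ ^ 2 = A ^ 2 - 2 * (A * B * Real.cos (a - b)) + B ^ 2 := by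
    rw [Complex.sq_norm, Complex.normSq_sub, ← hre, hAdef, hBdef, Complex.sq_norm, Complex.sq_norm]
    ring
  have key : (Real.sqrt (1 - m) * A) ^ 2 ≤ ‖lam - z‖ ^ 2 := by
    rw [mul_pow, Real.sq_sqrt (by linarith), hsq]
    have hAB : 0 ≤ A * B := mul_nonneg hA0 hB0
    have h5 : A * B * Real.cos (a - b) ≤ A * B * m := by
      exact mul_le_mul_of_nonneg_left hcos hAB
    nlinarith [sq_nonneg (A - B), sq_nonneg B, mul_nonneg hm0 (sq_nonneg (A - B)),
      mul_nonneg (by linarith : (0:ℝ) ≤ 1 - m) (sq_nonneg B)]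
  calc Real.sqrt (1 - m) * A = Real.sqrt ((Real.sqrt (1 - m) * A) ^ 2) :=
        (Real.sqrt_sq (mul_nonneg (Real.sqrt_nonneg _) hA0)).symm
    _ ≤ Real.sqrt (‖lam - z‖ ^ 2) := Real.sqrt_le_sqrt key
    _ = ‖lam - z‖ := Real.sqrt_sq (norm_nonneg _)

private lemma aux_closed (ψ : ℝ) (hψ : ψ < π) :
    IsClosed {z : ℂ | z = 0 ∨ ψ ≤ |Complex.arg z|} := by
  rw [← isOpen_compl_iff, isOpen_iff_mem_nhds]
  intro z hz
  simp only [Set.mem_compl_iff, Set.mem_setOf_eq, not_or, not_le] at hz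
  obtain ⟨hz0, harg⟩ := hz
  have hslit : z ∈ Complex.slitPlane := by
    rw [Complex.mem_slitPlane_iff]
    by_contra h
    push_neg at h
    obtain ⟨h1, h2⟩ := h
    have hne : z.re < 0 := by
      rcases lt_or_eq_of_le h1 with h | h
      · exact h
      · exact absurd (Complex.ext (by simp [← h]) (by simp [h2])) hz0
    have : Complex.arg z = π := Complex.arg_eq_pi_iff.mpr ⟨hne, h2⟩
    rw [this] at harg
    have : |π| = π := abs_of_pos Real.pi_pos
    -- harg : |π| < ψ contradiction with ψ < π
    rw [this] at harg
    linarith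
  have hc : ContinuousAt (fun w => |Complex.arg w|) z :=
    (Complex.continuousAt_arg hslit).abs
  have h1 : ∀ᶠ w in nhds z, |Complex.arg w| < ψ := hc.eventually_lt_const harg
  have h2 : ∀ᶠ w in nhds z, w ≠ 0 := by
    exact IsOpen.eventually_mem isOpen_compl_singleton hz0
  filter_upwards [h1, h2] with w hw1 hw2
  simp only [Set.mem_compl_iff, Set.mem_setOf_eq, not_or, not_le]
  exact ⟨hw2, hw1⟩

private lemma aux_compact_bound {K : Set ℂ} (hK : IsCompact K) (P : ℂ → ℝ → Prop)
    (hmono : ∀ lam C C', C ≤ C' → P lam C → P lam C')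
    (hloc : ∀ z ∈ K, ∃ δ > 0, ∃ C, ∀ lam ∈ K, dist lam z < δ → P lam C) :
    ∃ C, ∀ lam ∈ K, P lam C := by
  have hloc' : ∀ z : ℂ, ∃ d : ℝ × ℝ, 0 < d.1 ∧
      (z ∈ K → ∀ lam ∈ K, dist lam z < d.1 → P lam d.2) := by
    intro z
    by_cases hz : z ∈ K
    · obtain ⟨δ, hδ, C, hC⟩ := hloc z hz
      exact ⟨(δ, C), hδ, fun _ => hC⟩
    · exact ⟨(1, 0), one_pos, fun h => absurd h hz⟩
  choose d hd1 hd2 using hloc'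
  obtain ⟨t, htK, hcover⟩ := hK.elim_nhds_subcover (fun z => Metric.ball z (d z).1)
    (fun z _ => Metric.ball_mem_nhds _ (hd1 z))
  refine ⟨∑ z ∈ t, |(d z).2|, ?_⟩
  intro lam hlam
  obtain ⟨z, hzmem⟩ := Set.mem_iUnion₂.mp (hcover hlam)
  obtain ⟨hzt, hball⟩ := hzmem
  refine hmono lam _ _ ?_ (hd2 z (htK z hzt) lam hlam (Metric.mem_ball.mp hball))
  exact le_trans (le_abs_self _)
    (Finset.single_le_sum (f := fun z => |(d z).2|) (fun i _ => abs_nonneg _) hzt)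


private lemma aux_neumann {X : Type*}
    [NormedAddCommGroup X] [NormedSpace ℂ X] [CompleteSpace X]
    (p : Submodule ℂ X) (T : p →ₗ[ℂ] X) (z₀ lam : ℂ)
    (R₀ : X →L[ℂ] X) (hmem₀ : ∀ x, R₀ x ∈ p)
    (h1 : ∀ x, z₀ • R₀ x - T ⟨R₀ x, hmem₀ x⟩ = x)
    (h2 : ∀ y : p, R₀ (z₀ • (y : X) - T y) = (y : X))
    (hnear : ‖(lam - z₀) • R₀‖ ≤ 1 / 2) :
    ∃ R : X →L[ℂ] X, ∃ hmem : ∀ x, R x ∈ p,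
      (∀ x, lam • R x - T ⟨R x, hmem x⟩ = x) ∧
      (∀ y : p, R (lam • (y : X) - T y) = (y : X)) ∧ ‖R‖ ≤ 2 * ‖R₀‖ := by
  set u : X →L[ℂ] X := (lam - z₀) • R₀ with hu
  have hu1 : ‖-u‖ < 1 := by rw [norm_neg]; linarith
  set E : (X →L[ℂ] X)ˣ := Units.oneSub (-u) hu1 with hE
  have hEval : (E : X →L[ℂ] X) = 1 + u := by
    rw [hE, Units.val_oneSub, sub_neg_eq_add]
  set S : X →L[ℂ] X := ↑E⁻¹ with hS
  have hES : (1 + u) * S = 1 := by rw [← hEval]; exact E.mul_inv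
  have hSE : S * (1 + u) = 1 := by rw [← hEval]; exact E.inv_mul
  have hSnorm : ‖S‖ ≤ 2 := by
    have h' : S = 1 - S * u := by
      have : S * (1 + u) = S + S * u := by rw [mul_add, mul_one]
      rw [this] at hSE
      rw [← hSE]; abel
    have hb : ‖S * u‖ ≤ ‖S‖ * (1 / 2) :=
      le_trans (norm_mul_le _ _) (mul_le_mul_of_nonneg_left hnear (norm_nonneg _))
    have : ‖S‖ ≤ ‖(1 : X →L[ℂ] X)‖ + ‖S * u‖ := by
      conv_lhs => rw [h']
      exact norm_sub_le _ _
    have hone : ‖(1 : X →L[ℂ] X)‖ ≤ 1 := ContinuousLinearMap.norm_id_le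
    linarith
  have hcomm : S * R₀ = R₀ * S := by
    have h0 : (1 + u) * R₀ = R₀ * (1 + u) := by
      rw [hu, add_mul, mul_add, one_mul, mul_one, smul_mul_assoc, mul_smul_comm]
    calc S * R₀ = S * R₀ * ((1 + u) * S) := by rw [hES, mul_one]
      _ = S * ((1 + u) * R₀) * S := by rw [h0]; noncomm_ring
      _ = (S * (1 + u)) * (R₀ * S) := by noncomm_ring
      _ = R₀ * S := by rw [hSE, one_mul]
  refine ⟨R₀ * S, fun x => hmem₀ (S x), ?_, ?_, ?_⟩
  · intro x
    have hT : T ⟨R₀ (S x), hmem₀ (S x)⟩ = z₀ • R₀ (S x) - S x := by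
      have h := h1 (S x)
      rw [sub_eq_iff_eq_add] at h
      rw [h]; abel
    show lam • R₀ (S x) - T ⟨R₀ (S x), hmem₀ (S x)⟩ = x
    rw [hT]
    have hfinal : ((1 + u) * S) x = x := by rw [hES]; rfl
    calc lam • R₀ (S x) - (z₀ • R₀ (S x) - S x)
        = (lam - z₀) • R₀ (S x) + S x := by rw [sub_smul]; abel
      _ = u (S x) + S x := by rw [hu]; rfl
      _ = ((1 + u) * S) x := by
          rw [ContinuousLinearMap.mul_apply, ContinuousLinearMap.add_apply,
            ContinuousLinearMap.one_apply]; abel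
      _ = x := hfinal
  · intro y
    have key : R₀ (lam • (y : X) - T y) = ((1 : X →L[ℂ] X) + u) ((y : X)) := by
      have hsplit : lam • (y : X) - T y = (z₀ • (y : X) - T y) + (lam - z₀) • (y : X) := by
        rw [sub_smul]; abel
      rw [hsplit, map_add, h2 y, ContinuousLinearMap.add_apply,
        ContinuousLinearMap.one_apply, hu, ContinuousLinearMap.smul_apply,
        ContinuousLinearMap.map_smul]
    show (R₀ * S) (lam • (y : X) - T y) = (y : X)
    rw [← hcomm, ContinuousLinearMap.mul_apply, key, ← ContinuousLinearMap.mul_apply, hSE,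
      ContinuousLinearMap.one_apply]
  · calc ‖R₀ * S‖ ≤ ‖R₀‖ * ‖S‖ := norm_mul_le _ _
      _ ≤ ‖R₀‖ * 2 := mul_le_mul_of_nonneg_left hSnorm (norm_nonneg _)
      _ = 2 * ‖R₀‖ := mul_comm _ _


/-- Let `T` be a closed operator on a Banach space `X` whose resolvent set contains
`{0} ∪ {z : |arg z| ≥ σ}` for some `σ ∈ (0, π)`, and suppose `μ₀ + T` is sectorial of
some angle `ω < σ` for some `μ₀ > 0` (spectrum in the closed sector of angle `ω` and a
uniform bound on `‖λ(λ - μ₀ - T)⁻¹‖` off this sector).  Then for every `ψ ∈ (σ, π)`,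
every `λ` outside the closed sector of angle `ψ` lies in `ρ(T)` and
`sup ‖λ(λ - T)⁻¹‖ < ∞` there; that is, `T` is sectorial of angle at most `σ`. -/
theorem sectorial_of_shifted_sectorial {X : Type*}
    [NormedAddCommGroup X] [NormedSpace ℂ X] [CompleteSpace X]
    (p : Submodule ℂ X) (T : p →ₗ[ℂ] X)
    (hTclosed : IsClosed {q : X × X | ∃ x : p, (x : X) = q.1 ∧ T x = q.2})
    (σ : ℝ) (hσ₁ : 0 < σ) (hσ₂ : σ < π)
    (hres : ∀ lam : ℂ, (lam = 0 ∨ σ ≤ |Complex.arg lam|) →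
      ∃ R : X →L[ℂ] X, ∃ hmem : ∀ x, R x ∈ p,
        (∀ x, lam • R x - T ⟨R x, hmem x⟩ = x) ∧
        (∀ y : p, R (lam • (y : X) - T y) = (y : X)))
    (μ₀ : ℝ) (hμ₀ : 0 < μ₀)
    (ω : ℝ) (hω₁ : 0 < ω) (hω₂ : ω < σ)
    (hsec : ∃ Cb : ℝ, ∀ lam : ℂ, lam ≠ 0 → ω < |Complex.arg lam| →
      ∃ R : X →L[ℂ] X, ∃ hmem : ∀ x, R x ∈ p,
        (∀ x, (lam - (μ₀ : ℂ)) • R x - T ⟨R x, hmem x⟩ = x) ∧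
        (∀ y : p, R ((lam - (μ₀ : ℂ)) • (y : X) - T y) = (y : X)) ∧
        ‖lam • R‖ ≤ Cb) :
    ∀ ψ : ℝ, σ < ψ → ψ < π →
      ∃ Cb : ℝ, ∀ lam : ℂ, lam ≠ 0 → ψ < |Complex.arg lam| →
        ∃ R : X →L[ℂ] X, ∃ hmem : ∀ x, R x ∈ p,
          (∀ x, lam • R x - T ⟨R x, hmem x⟩ = x) ∧
          (∀ y : p, R (lam • (y : X) - T y) = (y : X)) ∧
          ‖lam • R‖ ≤ Cb := by
  intro ψ hψσ hψπ
  obtain ⟨Cb0, hCb⟩ := hsec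
  set Cb : ℝ := max Cb0 0 with hCbdef
  have hCbnn : 0 ≤ Cb := le_max_right _ _
  clear_value Cb
  have hωψ : ω < ψ := lt_trans hω₂ hψσ
  -- geometric constants
  set m : ℝ := max (Real.cos (ψ - ω)) 0 with hmdef
  have hm0 : 0 ≤ m := le_max_right _ _
  clear_value m
  have hm1 : m < 1 := by
    have hk : Real.cos (ψ - ω) < 1 := by
      have := Real.cos_lt_cos_of_nonneg_of_le_pi (le_refl 0) (by linarith : ψ - ω ≤ π)
        (by linarith : (0:ℝ) < ψ - ω)
      rwa [Real.cos_zero] at this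
    rw [hmdef]
    exact max_lt hk one_pos
  set c : ℝ := Real.sqrt (1 - m) with hcdef
  have hc0 : 0 < c := by rw [hcdef]; exact Real.sqrt_pos.mpr (by linarith)
  clear_value c
  set r : ℝ := 2 * μ₀ / c + 2 * μ₀ with hrdef
  clear_value r
  have hr2μ : 2 * μ₀ ≤ r := by
    have h0 : 0 ≤ 2 * μ₀ / c := div_nonneg (by linarith) hc0.le
    linarith
  have hr0 : 0 ≤ r := by linarith
  have hrc : μ₀ < c * r := by
    have h1 : c * r = 2 * μ₀ + c * (2 * μ₀) := by
      rw [hrdef]; field_simp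
    nlinarith [mul_pos hc0 hμ₀]
  -- the compact region and local bounds
  set K : Set ℂ := Metric.closedBall (0 : ℂ) r ∩ {z : ℂ | z = 0 ∨ ψ ≤ |Complex.arg z|}
    with hKdef
  have hKc : IsCompact K := (isCompact_closedBall _ _).inter_right (aux_closed ψ hψπ)
  set P : ℂ → ℝ → Prop := fun lam C =>
    ∃ R : X →L[ℂ] X, ∃ hmem : ∀ x, R x ∈ p,
      (∀ x, lam • R x - T ⟨R x, hmem x⟩ = x) ∧
      (∀ y : p, R (lam • (y : X) - T y) = (y : X)) ∧ ‖lam • R‖ ≤ C with hPdef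
  have hmono : ∀ lam C C', C ≤ C' → P lam C → P lam C' := by
    rintro lam C C' hCC' ⟨R, hmem, g1, g2, g3⟩
    exact ⟨R, hmem, g1, g2, le_trans g3 hCC'⟩
  have hloc : ∀ z ∈ K, ∃ δ > 0, ∃ C, ∀ lam ∈ K, dist lam z < δ → P lam C := by
    intro z hz
    obtain ⟨hzball, hzsec⟩ := hz
    have hzres : z = 0 ∨ σ ≤ |Complex.arg z| := by
      rcases hzsec with h | h
      · exact Or.inl h
      · exact Or.inr (le_trans (le_of_lt hψσ) h)
    obtain ⟨R₀, hmem₀, h1₀, h2₀⟩ := hres z hzres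
    set M : ℝ := ‖R₀‖ with hMdef
    have hM0 : 0 ≤ M := norm_nonneg _
    refine ⟨(2 * (M + 1))⁻¹, by positivity, r * (2 * M), ?_⟩
    intro lam hlamK hdist
    have hnear : ‖(lam - z) • R₀‖ ≤ 1 / 2 := by
      rw [norm_smul (lam - z) R₀]
      have hd : ‖lam - z‖ ≤ (2 * (M + 1))⁻¹ := by
        rw [← dist_eq_norm]
        exact le_of_lt hdist
      have e1 : (2 * (M + 1))⁻¹ * (M + 1) = 1 / 2 := by
        have h2M : (2 : ℝ) * (M + 1) ≠ 0 := by positivity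
        field_simp
      calc ‖lam - z‖ * M ≤ (2 * (M + 1))⁻¹ * (M + 1) := by
            apply mul_le_mul hd (by linarith) hM0 (by positivity)
        _ = 1 / 2 := e1
    obtain ⟨R, hmem, g1, g2, g3⟩ := aux_neumann p T z lam R₀ hmem₀ h1₀ h2₀ hnear
    refine ⟨R, hmem, g1, g2, ?_⟩
    have hlamr : ‖lam‖ ≤ r := by
      have := hlamK.1
      rw [Metric.mem_closedBall, Complex.dist_eq, sub_zero] at this
      exact this
    calc ‖lam • R‖ = ‖lam‖ * ‖R‖ := norm_smul lam R
      _ ≤ r * (2 * M) := mul_le_mul hlamr g3 (norm_nonneg _) hr0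
  obtain ⟨C1, hC1⟩ := aux_compact_bound hKc P hmono hloc
  refine ⟨max (2 * Cb) C1, ?_⟩
  intro lam hlam0 hlamarg
  rcases le_or_gt (‖lam‖) r with hsmall | hbig
  · -- small lam: use the compact bound
    have hlamK : lam ∈ K := by
      constructor
      · rw [Metric.mem_closedBall, Complex.dist_eq, sub_zero]; exact hsmall
      · exact Or.inr (le_of_lt hlamarg)
    obtain ⟨R, hmem, g1, g2, g3⟩ := hC1 lam hlamK
    exact ⟨R, hmem, g1, g2, le_trans g3 (le_max_right _ _)⟩
  · -- large lam: shift argument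
    have habs_ne : lam + (μ₀ : ℂ) ≠ 0 := by
      intro h
      have hlameq : lam = -(μ₀ : ℂ) := by linear_combination h
      have : ‖lam‖ = μ₀ := by
        rw [hlameq, norm_neg, Complex.norm_real, Real.norm_eq_abs, abs_of_pos hμ₀]
      rw [this] at hbig
      linarith
    have harg : ω < |Complex.arg (lam + (μ₀ : ℂ))| := by
      by_contra h
      push_neg at h
      have hdist := aux_dist ω ψ hω₁ hωψ hψπ lam (lam + (μ₀ : ℂ)) (le_of_lt hlamarg) h
      have heq : lam - (lam + (μ₀ : ℂ)) = -(μ₀ : ℂ) := by ring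
      rw [heq, norm_neg, Complex.norm_real, Real.norm_eq_abs, abs_of_pos hμ₀] at hdist
      have : c * r < c * ‖lam‖ := by
        exact mul_lt_mul_of_pos_left hbig hc0
      rw [← hmdef, ← hcdef] at hdist
      linarith
    obtain ⟨R, hmem, h1, h2, h3⟩ := hCb (lam + (μ₀ : ℂ)) habs_ne harg
    have h3' : ‖(lam + (μ₀ : ℂ)) • R‖ ≤ Cb := le_trans h3 (by rw [hCbdef]; exact le_max_left _ _)
    have hcancel : lam + (μ₀ : ℂ) - (μ₀ : ℂ) = lam := add_sub_cancel_right _ _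
    refine ⟨R, hmem, ?_, ?_, ?_⟩
    · intro x; have := h1 x; rwa [hcancel] at this
    · intro y; have := h2 y; rwa [hcancel] at this
    · -- norm bound
      have habs_lb : μ₀ ≤ ‖lam + (μ₀ : ℂ)‖ := by
        have htri : ‖lam‖ ≤ ‖lam + (μ₀ : ℂ)‖ + μ₀ := by
          have := norm_add_le (lam + (μ₀ : ℂ)) (-(μ₀ : ℂ))
          have heq : lam + (μ₀ : ℂ) + -(μ₀ : ℂ) = lam := by ring
          rw [heq, norm_neg, Complex.norm_real, Real.norm_eq_abs, abs_of_pos hμ₀] at this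
          exact this
        linarith
      have hRnorm : ‖lam + (μ₀ : ℂ)‖ * ‖R‖ ≤ Cb := by
        rw [← norm_smul (lam + (μ₀ : ℂ)) R]
        exact h3'
      have hμR : μ₀ * ‖R‖ ≤ Cb := by
        calc μ₀ * ‖R‖ ≤ ‖lam + (μ₀ : ℂ)‖ * ‖R‖ :=
              mul_le_mul_of_nonneg_right habs_lb (norm_nonneg _)
          _ ≤ Cb := hRnorm
      calc ‖lam • R‖ = ‖(lam + (μ₀ : ℂ)) • R - (μ₀ : ℂ) • R‖ := by
            rw [← sub_smul, hcancel]
        _ ≤ ‖(lam + (μ₀ : ℂ)) • R‖ + ‖(μ₀ : ℂ) • R‖ := norm_sub_le _ _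
        _ ≤ Cb + Cb := by
            have : ‖(μ₀ : ℂ) • R‖ = μ₀ * ‖R‖ := by
              rw [norm_smul ((μ₀ : ℂ)) R, Complex.norm_real, Real.norm_eq_abs,
                abs_of_pos hμ₀]
            rw [this]
            exact add_le_add h3' hμR
        _ = 2 * Cb := by ring
        _ ≤ max (2 * Cb) C1 := le_max_left _ _
end

section
/- For λ ∈ ℂ with Re λ > 0 and ξ ∈ ℝ^d, define m_λ(ξ) = (λ + |ξ|²)² / ((λ + |ξ|²)² + |ξ|⁴) (the symbol of M₁(λ)⁻¹ for the Beris–Edwards-type operator after sign normalization). Then for every fixed φ ∈ (0, π/2) there is a constant C (independent of λ with |arg λ| ≤ φ and of ξ) such that |m_λ(ξ)| ≤ C for all ξ ∈ ℝ^d; in particular |(λ+|ξ|²)² + |ξ|⁴| ≥ c·(|λ| + |ξ|²)² for some c > 0 depending only on φ. -/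
open Real

/-- For `λ` in a sector `|arg λ| ≤ φ` with `φ < π/2` (so `Re λ > 0`) and `ξ ∈ ℝ^d`,
the symbol `m_λ(ξ) = (λ + |ξ|²)² / ((λ + |ξ|²)² + |ξ|⁴)` of `M₁(λ)⁻¹` for the
Beris–Edwards-type operator is bounded by a constant `C` independent of such `λ` and
of `ξ`; in particular `|(λ + |ξ|²)² + |ξ|⁴| ≥ c·(|λ| + |ξ|²)²` for some `c > 0`
depending only on `φ`. -/
theorem berisEdwards_symbol_bound (d : ℕ) :
    ∀ φ : ℝ, 0 < φ → φ < π / 2 →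
      ∃ C > (0 : ℝ), ∃ c > (0 : ℝ), ∀ lam : ℂ, lam ≠ 0 → |Complex.arg lam| ≤ φ →
        ∀ ξ : EuclideanSpace ℝ (Fin d),
          ‖(lam + (‖ξ‖ : ℂ) ^ 2) ^ 2 / ((lam + (‖ξ‖ : ℂ) ^ 2) ^ 2 + (‖ξ‖ : ℂ) ^ 4)‖
              ≤ C ∧
            c * (‖lam‖ + ‖ξ‖ ^ 2) ^ 2
              ≤ ‖(lam + (‖ξ‖ : ℂ) ^ 2) ^ 2 + (‖ξ‖ : ℂ) ^ 4‖ := by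
  intro φ hφ0 hφ2
  have hcos : 0 < Real.cos φ :=
    Real.cos_pos_of_mem_Ioo ⟨by linarith [Real.pi_pos], hφ2⟩
  have hcos1 : Real.cos φ ≤ 1 := Real.cos_le_one φ
  refine ⟨1 / Real.cos φ ^ 2, by positivity, Real.cos φ ^ 2, by positivity, ?_⟩
  intro lam hlam harg ξ
  set t : ℝ := ‖ξ‖ ^ 2 with ht
  have ht0 : 0 ≤ t := sq_nonneg _
  have habs : 0 < ‖lam‖ := norm_pos_iff.mpr hlam
  -- Re λ ≥ cos φ * |λ|
  have hre : Real.cos φ * ‖lam‖ ≤ lam.re := by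
    have hcosarg : Real.cos (Complex.arg lam) = lam.re / ‖lam‖ :=
      Complex.cos_arg hlam
    have hc : Real.cos φ ≤ Real.cos (Complex.arg lam) := by
      rw [← Real.cos_abs (Complex.arg lam)]
      exact Real.cos_le_cos_of_nonneg_of_le_pi (abs_nonneg _)
        (by linarith [Real.pi_pos]) harg
    have := mul_le_mul_of_nonneg_right hc habs.le
    rwa [hcosarg, div_mul_cancel₀ _ habs.ne'] at this
  set w : ℂ := lam + (t : ℂ) with hw
  have hwre : Real.cos φ * (‖lam‖ + t) ≤ w.re := by
    have : w.re = lam.re + t := by simp [hw]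
    rw [this]
    nlinarith [mul_le_mul_of_nonneg_right hcos1 ht0]
  have hwre0 : 0 ≤ w.re := le_trans (by positivity) hwre
  -- factor the denominator
  have hfac : w ^ 2 + (t : ℂ) ^ 2 = (w + t * Complex.I) * (w - t * Complex.I) := by
    have : (Complex.I : ℂ) ^ 2 = -1 := Complex.I_sq
    ring_nf
    rw [Complex.I_sq]
    ring
  have hfact1 : w.re ≤ ‖w + t * Complex.I‖ := by
    have : (w + t * Complex.I).re = w.re := by simp
    calc w.re ≤ |(w + t * Complex.I).re| := by rw [this]; exact le_abs_self _
      _ ≤ ‖w + t * Complex.I‖ := Complex.abs_re_le_norm _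
  have hfact2 : w.re ≤ ‖w - t * Complex.I‖ := by
    have : (w - t * Complex.I).re = w.re := by simp
    calc w.re ≤ |(w - t * Complex.I).re| := by rw [this]; exact le_abs_self _
      _ ≤ ‖w - t * Complex.I‖ := Complex.abs_re_le_norm _
  have hden : Real.cos φ ^ 2 * (‖lam‖ + t) ^ 2 ≤ ‖w ^ 2 + (t : ℂ) ^ 2‖ := by
    rw [hfac, norm_mul]
    calc Real.cos φ ^ 2 * (‖lam‖ + t) ^ 2
        = (Real.cos φ * (‖lam‖ + t)) * (Real.cos φ * (‖lam‖ + t)) := by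
          ring
      _ ≤ w.re * w.re := mul_le_mul hwre hwre (by positivity) hwre0
      _ ≤ ‖w + t * Complex.I‖ * ‖w - t * Complex.I‖ :=
          mul_le_mul hfact1 hfact2 hwre0 (norm_nonneg _)
  -- rewrite the goal expressions
  have hrw : (lam + (‖ξ‖ : ℂ) ^ 2) = w := by rw [hw]; push_cast [ht]; ring
  have hrw4 : ((‖ξ‖ : ℂ)) ^ 4 = (t : ℂ) ^ 2 := by push_cast [ht]; ring
  have hnl : ‖lam‖ = ‖lam‖ := rfl
  rw [hrw, hrw4, hnl]
  have hdpos : 0 < ‖w ^ 2 + (t : ℂ) ^ 2‖ :=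
    lt_of_lt_of_le (by positivity) hden
  constructor
  · rw [norm_div, div_le_div_iff₀ hdpos (by positivity : (0:ℝ) < Real.cos φ ^ 2), norm_pow]
    have hnum : ‖w‖ ≤ ‖lam‖ + t := by
      calc ‖w‖ ≤ ‖lam‖ + ‖(t : ℂ)‖ := norm_add_le _ _
        _ = ‖lam‖ + t := by rw [hnl, Complex.norm_real, Real.norm_of_nonneg ht0]
    calc ‖w‖ ^ 2 * Real.cos φ ^ 2
        ≤ (‖lam‖ + t) ^ 2 * Real.cos φ ^ 2 := by
          apply mul_le_mul_of_nonneg_right _ (by positivity)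
          exact pow_le_pow_left₀ (norm_nonneg _) hnum 2
      _ = 1 * (Real.cos φ ^ 2 * (‖lam‖ + t) ^ 2) := by ring
      _ ≤ 1 * ‖w ^ 2 + (t : ℝ) ^ 2‖ := by
          rw [one_mul, one_mul]; exact_mod_cast hden
  · calc Real.cos φ ^ 2 * (‖lam‖ + t) ^ 2 ≤ ‖w ^ 2 + (t : ℂ) ^ 2‖ := hden
      _ = _ := by norm_cast
end
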